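/- Let P be a slicing of a triangulated category D satisfying the octahedral axiom, such that every nonzero object of D admits a Harder–Narasimhan filtration. Fix θ ∈ ℝ and suppose given two full additive subcategories P⁻ and P⁺ of P(θ), closed under isomorphisms and direct summands, such that Hom(X⁻, X⁺) = 0 = Hom(X⁺, X⁻) for all X⁻ ∈ P⁻, X⁺ ∈ P⁺, and every object of P(θ) is isomorphic to a direct sum X⁻ ⊕ X⁺ with X⁻ ∈ P⁻ and X⁺ ∈ P⁺. Define D^{≤0} to be the strictly full subcategory of objects X such that X = 0 or every semistable HN-factor of X has phase > θ or lies in P⁻, and define D^{≥1} to be the strictly full subcategory of objects X such that X = 0 or every semistable HN-factor of X has phase < θ or lies in P⁺. Then (D^{≤0}, D^{≥1}[1]) is a t-structure on D. -/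

import Mathlib

open CategoryTheory CategoryTheory.Limits CategoryTheory.Pretriangulated

universe v u

variable (D : Type u) [Category.{v} D] [HasZeroObject D] [HasShift D ℤ] [Preadditive D]
  [∀ n : ℤ, (shiftFunctor D n).Additive] [Pretriangulated D]

/-- A slicing `P` of a triangulated category `D`: for every real number `φ`, a full additive
subcategory `P φ` (given by a predicate on objects), closed under isomorphisms, such that
(i) `P (φ + 1) = P φ ⟦1⟧` and (ii) `Hom(A₁, A₂) = 0` whenever `A₁ ∈ P φ₁`, `A₂ ∈ P φ₂` and
`φ₁ > φ₂`. -/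
structure Slicing where
  /-- the objects of the slice with phase `φ` -/
  P : ℝ → D → Prop
  mem_of_iso : ∀ {φ : ℝ} {X Y : D}, (X ≅ Y) → P φ X → P φ Y
  zero_mem : ∀ (φ : ℝ) (X : D), IsZero X → P φ X
  sum_mem : ∀ (φ : ℝ) (X Y : D), P φ X → P φ Y → P φ (X ⊞ Y)
  shift_mem : ∀ (φ : ℝ) (X : D), P φ X → P (φ + 1) (X⟦(1 : ℤ)⟧)
  shift_mem' : ∀ (φ : ℝ) (X : D), P (φ + 1) (X⟦(1 : ℤ)⟧) → P φ X
  hom_zero : ∀ {φ₁ φ₂ : ℝ}, φ₂ < φ₁ → ∀ {A₁ A₂ : D}, P φ₁ A₁ → P φ₂ A₂ →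
    ∀ f : A₁ ⟶ A₂, f = 0

variable {D}

/-- A Harder–Narasimhan filtration of a (necessarily nonzero) object `X` with respect to a
slicing `S`: a finite collection of distinguished triangles
`F (j+1) → F j → A j →⁺ (F (j+1))⟦1⟧` for `0 ≤ j ≤ n`, with `F 0 = X`, `F (n+1) = 0`, where
each `A j` is a nonzero object of `S.P (phase j)` and
`phase n > phase (n-1) > ⋯ > phase 0`.
(The semistable HN-factors are `A n, …, A 0`; `φ₊(X) = phase n` and `φ₋(X) = phase 0`.) -/
structure HNFiltration (S : Slicing D) (X : D) where
  /-- the number of steps: there are `n + 1` HN-factors `A 0, …, A n` -/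
  n : ℕ
  /-- the filtration objects -/
  F : ℕ → D
  /-- the semistable factors -/
  A : ℕ → D
  /-- the phases of the factors -/
  phase : ℕ → ℝ
  f : ∀ j : ℕ, F (j + 1) ⟶ F j
  g : ∀ j : ℕ, F j ⟶ A j
  h : ∀ j : ℕ, A j ⟶ (F (j + 1))⟦(1 : ℤ)⟧
  F_zero : F 0 = X
  isZero_top : IsZero (F (n + 1))
  mem : ∀ j ≤ n, S.P (phase j) (A j)
  nonzero : ∀ j ≤ n, ¬ IsZero (A j)
  dist : ∀ j ≤ n, (Triangle.mk (f j) (g j) (h j) ∈ distTriang D)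
  phase_lt : ∀ j : ℕ, j + 1 ≤ n → phase j < phase (j + 1)

/-- `IsTStructure D Dle Dge` asserts that the pair of (iso-closed) subcategories
`(D^{≤0}, D^{≥1}[1])`, where `Dle = D^{≤0}` and `Dge = D^{≥1}`, is a t-structure on `D`:
both predicates are closed under isomorphisms (strict fullness), `D^{≤0} ⊆ D^{≤1}`
(equivalently `Dle X → Dle (X⟦1⟧)`), `D^{≥1} ⊆ D^{≥0}` (equivalently `Dge X → Dge (X⟦-1⟧)`),
`Hom(D^{≤0}, D^{≥1}) = 0`, and every object `X` sits in a distinguished triangle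
`U → X → V →⁺` with `U ∈ D^{≤0}` and `V ∈ D^{≥1}`. -/
structure IsTStructure {D : Type u} [Category.{v} D] [HasZeroObject D] [HasShift D ℤ]
    [Preadditive D] [∀ n : ℤ, (shiftFunctor D n).Additive] [Pretriangulated D]
    (Dle Dge : D → Prop) : Prop where
  le_iso : ∀ {X Y : D}, (X ≅ Y) → Dle X → Dle Y
  ge_iso : ∀ {X Y : D}, (X ≅ Y) → Dge X → Dge Y
  le_shift : ∀ X : D, Dle X → Dle (X⟦(1 : ℤ)⟧)
  ge_shift : ∀ X : D, Dge X → Dge (X⟦(-1 : ℤ)⟧)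
  hom_zero : ∀ {X Y : D} (f : X ⟶ Y), Dle X → Dge Y → f = 0
  exists_triangle : ∀ X : D, ∃ (U V : D) (a : U ⟶ X) (b : X ⟶ V) (c : V ⟶ U⟦(1 : ℤ)⟧),
    Dle U ∧ Dge V ∧ (Triangle.mk a b c ∈ distTriang D)

/-!
A morphism from an object whose HN factors are all of "type `≤ 0`" (phase `> θ` or in `P⁻`) to
one whose factors are all of "type `≥ 1`" (phase `< θ` or in `P⁺`) vanishes by dévissage along
both filtrations, because it vanishes between single factors: by the phase axiom, or by
`Hom(P⁻, P⁺) = 0`.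

For the truncation triangle of `X`, cut its HN filtration `F_{n+1} = 0 → ⋯ → F_0 = X` at the first
factor `A_k` of phase `≥ θ`. If that phase is `θ`, split `A_k ≅ X⁻ ⊕ X⁺` and let `U` be the fibre
of `F_k → A_k → X⁺`; by the octahedral axiom `U` is an extension of `X⁻` by `F_{k+1}`, and the cone
of `U → X` is an extension of the cone of `F_k → X` by `X⁺`. Both have HN filtrations of the
required type, since adding a semistable object of extreme phase to an object with an HN filtration
(as a sub- or quotient object) again gives one, by the octahedral axiom and induction.
-/
open ZeroObject

namespace Slicing

variable (S : Slicing D)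

lemma phase_eq_of_mem {φ ψ : ℝ} {A : D} (hφ : S.P φ A) (hψ : S.P ψ A) (hA : ¬ IsZero A) :
    φ = ψ := by
  by_contra hne
  refine hA ((IsZero.iff_id_eq_zero A).2 ?_)
  rcases lt_or_gt_of_ne hne with h | h
  · exact S.hom_zero h hψ hφ _
  · exact S.hom_zero h hφ hψ _

lemma neg_one_shift_mem {φ : ℝ} {A : D} (h : S.P φ A) : S.P (φ + -1) (A⟦(-1 : ℤ)⟧) :=
  S.shift_mem' _ _ <| by
    rw [neg_add_cancel_right]
    exact S.mem_of_iso ((shiftFunctorCompIsoId D (-1 : ℤ) 1 (by norm_num)).app A).symm h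

end Slicing

namespace HNFiltration

variable {S : Slicing D} {X Y : D} (H : HNFiltration S X)

lemma phase_lt_phase {i j : ℕ} (hij : i < j) (hj : j ≤ H.n) : H.phase i < H.phase j := by
  induction j, hij using Nat.le_induction with
  | base => exact H.phase_lt i hj
  | succ j hij ih => exact (ih (by omega)).trans (H.phase_lt j hj)

lemma phase_le_phase {i j : ℕ} (hij : i ≤ j) (hj : j ≤ H.n) : H.phase i ≤ H.phase j := by
  rcases hij.lt_or_eq with hij | rfl
  · exact (H.phase_lt_phase hij hj).le
  · exact le_rfl

lemma exists_distTriang_zero :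
    ∃ (f : H.F 1 ⟶ X) (g : X ⟶ H.A 0) (h : H.A 0 ⟶ (H.F 1)⟦(1 : ℤ)⟧),
      Triangle.mk f g h ∈ distTriang D := by
  obtain ⟨n, F, A, phase, f, g, h, rfl, -, -, -, hT, -⟩ := H
  exact ⟨_, _, _, hT 0 (Nat.zero_le n)⟩

noncomputable def ofIso (e : X ≅ Y) : HNFiltration S Y where
  n := H.n
  F j := match j with | 0 => Y | j + 1 => H.F (j + 1)
  A := H.A
  phase := H.phase
  f j := match j with | 0 => H.f 0 ≫ eqToHom H.F_zero ≫ e.hom | j + 1 => H.f (j + 1)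
  g j := match j with | 0 => e.inv ≫ eqToHom H.F_zero.symm ≫ H.g 0 | j + 1 => H.g (j + 1)
  h := H.h
  F_zero := rfl
  isZero_top := H.isZero_top
  mem := H.mem
  nonzero := H.nonzero
  dist
    | 0, hj => isomorphic_distinguished _ (H.dist 0 hj) _ <|
        Triangle.isoMk _ _ (Iso.refl _) (e.symm ≪≫ eqToIso H.F_zero.symm) (Iso.refl _)
          (by simp [Triangle.mk]) (by simp [Triangle.mk]) (by simp [Triangle.mk])
    | j + 1, hj => H.dist (j + 1) hj
  phase_lt := H.phase_lt

noncomputable def shift (m : ℤ) (d : ℝ) (hP : ∀ (φ : ℝ) (A : D), S.P φ A → S.P (φ + d) (A⟦m⟧)) :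
    HNFiltration S (X⟦m⟧) where
  n := H.n
  F j := (H.F j)⟦m⟧
  A j := (H.A j)⟦m⟧
  phase j := H.phase j + d
  f j := ((Triangle.shiftFunctor D m).obj (Triangle.mk (H.f j) (H.g j) (H.h j))).mor₁
  g j := ((Triangle.shiftFunctor D m).obj (Triangle.mk (H.f j) (H.g j) (H.h j))).mor₂
  h j := ((Triangle.shiftFunctor D m).obj (Triangle.mk (H.f j) (H.g j) (H.h j))).mor₃
  F_zero := by rw [H.F_zero]
  isZero_top := (shiftFunctor D m).map_isZero H.isZero_top
  mem j hj := hP _ _ (H.mem j hj)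
  nonzero j hj h0 := H.nonzero j hj (h0.of_full_of_faithful_of_isZero (shiftFunctor D m) _)
  dist j hj := Triangle.shift_distinguished _ (H.dist j hj) m
  phase_lt j hj := add_lt_add_left (H.phase_lt j hj) d

noncomputable def tail (k : ℕ) (hk : k ≤ H.n) : HNFiltration S (H.F k) where
  n := H.n - k
  F j := H.F (k + j)
  A j := H.A (k + j)
  phase j := H.phase (k + j)
  f j := H.f (k + j)
  g j := H.g (k + j)
  h j := H.h (k + j)
  F_zero := rfl
  isZero_top := by
    rw [show k + (H.n - k + 1) = H.n + 1 by omega]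
    exact H.isZero_top
  mem j hj := H.mem (k + j) (by omega)
  nonzero j hj := H.nonzero (k + j) (by omega)
  dist j hj := H.dist (k + j) (by omega)
  phase_lt j hj := H.phase_lt (k + j) (by omega)

noncomputable def single {φ : ℝ} (hX : S.P φ X) (hX0 : ¬ IsZero X) : HNFiltration S X where
  n := 0
  F j := match j with | 0 => X | _ + 1 => 0
  A _ := X
  phase _ := φ
  f _ := 0
  g j := match j with | 0 => 𝟙 X | _ + 1 => 0
  h _ := 0
  F_zero := rfl
  isZero_top := isZero_zero D
  mem _ _ := hX
  nonzero _ _ := hX0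
  dist
    | 0, _ => contractible_distinguished₁ X
    | _ + 1, hj => by omega
  phase_lt _ hj := by omega

noncomputable def cons {φ : ℝ} {F₁ A₀ : D} (H₁ : HNFiltration S F₁) {a : F₁ ⟶ X} {b : X ⟶ A₀}
    {c : A₀ ⟶ F₁⟦(1 : ℤ)⟧} (hT : Triangle.mk a b c ∈ distTriang D) (hA : S.P φ A₀)
    (hA0 : ¬ IsZero A₀) (hφ : φ < H₁.phase 0) : HNFiltration S X where
  n := H₁.n + 1
  F j := match j with | 0 => X | j + 1 => H₁.F j
  A j := match j with | 0 => A₀ | j + 1 => H₁.A j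
  phase j := match j with | 0 => φ | j + 1 => H₁.phase j
  f j := match j with | 0 => eqToHom H₁.F_zero ≫ a | j + 1 => H₁.f j
  g j := match j with | 0 => b | j + 1 => H₁.g j
  h j := match j with | 0 => c ≫ (eqToHom H₁.F_zero.symm)⟦(1 : ℤ)⟧' | j + 1 => H₁.h j
  F_zero := rfl
  isZero_top := H₁.isZero_top
  mem
    | 0, _ => hA
    | j + 1, hj => H₁.mem j (by omega)
  nonzero
    | 0, _ => hA0
    | j + 1, hj => H₁.nonzero j (by omega)
  dist
    | 0, _ => isomorphic_distinguished _ hT _ <|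
        Triangle.isoMk _ _ (eqToIso H₁.F_zero) (Iso.refl _) (Iso.refl _)
          (by simp [Triangle.mk]) (by simp [Triangle.mk])
          (by simp [Triangle.mk, ← Functor.map_comp])
    | j + 1, hj => H₁.dist j (by omega)
  phase_lt
    | 0, _ => hφ
    | j + 1, hj => H₁.phase_lt j (by omega)

lemma eq_zero_of_forall_hom_factor {A : D} (hA : ∀ j ≤ H.n, ∀ g : A ⟶ H.A j, g = 0)
    (f : A ⟶ X) : f = 0 := by
  have key : ∀ m ≤ H.n + 1, ∀ g : A ⟶ H.F m, g = 0 := by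
    intro m hm
    induction hm using Nat.decreasingInduction with
    | self => exact fun g => H.isZero_top.eq_of_tgt _ _
    | of_succ m hm ih =>
      intro g
      obtain ⟨g', rfl⟩ : ∃ g' : A ⟶ H.F (m + 1), g = g' ≫ H.f m :=
        Triangle.coyoneda_exact₂ _ (H.dist m (by omega)) g (hA m (by omega) _)
      rw [ih g', zero_comp]
  simpa using key 0 (Nat.zero_le _) (f ≫ eqToHom H.F_zero.symm)

lemma eq_zero_of_forall_factor_hom {B : D} (hB : ∀ j ≤ H.n, ∀ g : H.A j ⟶ B, g = 0)
    (f : X ⟶ B) : f = 0 := by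
  have key : ∀ m ≤ H.n + 1, ∀ g : H.F m ⟶ B, g = 0 := by
    intro m hm
    induction hm using Nat.decreasingInduction with
    | self => exact fun g => H.isZero_top.eq_of_src _ _
    | of_succ m hm ih =>
      intro g
      obtain ⟨g', rfl⟩ : ∃ g' : H.A m ⟶ B, g = H.g m ≫ g' :=
        Triangle.yoneda_exact₂ _ (H.dist m (by omega)) g (ih _)
      rw [hB m (by omega) g', comp_zero]
  simpa using key 0 (Nat.zero_le _) (eqToHom H.F_zero ≫ f)

end HNFiltration

def HasHNFactors (S : Slicing D) (C : ℝ → D → Prop) (X : D) : Prop :=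
  IsZero X ∨ ∃ H : HNFiltration S X, ∀ j ≤ H.n, C (H.phase j) (H.A j)

namespace HasHNFactors

variable {S : Slicing D} {C C' : ℝ → D → Prop} {X Y : D}

lemma mono (hX : HasHNFactors S C X) (hCC' : ∀ φ A, C φ A → C' φ A) : HasHNFactors S C' X :=
  hX.imp_right fun ⟨H, hH⟩ => ⟨H, fun j hj => hCC' _ _ (hH j hj)⟩

lemma of_iso (hX : HasHNFactors S C X) (e : X ≅ Y) : HasHNFactors S C Y :=
  hX.imp (fun h => h.of_iso e.symm) fun ⟨H, hH⟩ => ⟨H.ofIso e, hH⟩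

lemma shift (m : ℤ) (d : ℝ) (hP : ∀ (φ : ℝ) (A : D), S.P φ A → S.P (φ + d) (A⟦m⟧))
    (hCC' : ∀ {φ : ℝ} {A : D}, S.P φ A → ¬ IsZero A → C φ A → C' (φ + d) (A⟦m⟧))
    (hX : HasHNFactors S C X) : HasHNFactors S C' (X⟦m⟧) :=
  hX.imp (fun h => (shiftFunctor D m).map_isZero h)
    fun ⟨H, hH⟩ => ⟨H.shift m d hP, fun j hj => hCC' (H.mem j hj) (H.nonzero j hj) (hH j hj)⟩

lemma of_semistable {φ : ℝ} (hX : S.P φ X) (hC : C φ X) : HasHNFactors S C X := by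
  by_cases hX0 : IsZero X
  · exact Or.inl hX0
  · exact Or.inr ⟨.single hX hX0, fun _ _ => hC⟩

lemma hom_eq_zero (hX : HasHNFactors S C X) (hY : HasHNFactors S C' Y)
    (hCC' : ∀ {φ ψ : ℝ} {A B : D}, S.P φ A → S.P ψ B → C φ A → C' ψ B → ∀ g : A ⟶ B, g = 0)
    (f : X ⟶ Y) : f = 0 := by
  rcases hX with hX | ⟨HX, hHX⟩
  · exact hX.eq_of_src _ _
  rcases hY with hY | ⟨HY, hHY⟩
  · exact hY.eq_of_tgt _ _
  refine HX.eq_zero_of_forall_factor_hom (fun i hi g => ?_) f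
  exact HY.eq_zero_of_forall_hom_factor
    (fun j hj => hCC' (HX.mem i hi) (HY.mem j hj) (hHX i hi) (hHY j hj)) g

lemma of_distTriang_semistable₃ {φ : ℝ} {F₁ A : D} {a : F₁ ⟶ X} {b : X ⟶ A}
    {c : A ⟶ F₁⟦(1 : ℤ)⟧} (hT : Triangle.mk a b c ∈ distTriang D) (hA : S.P φ A) (hC : C φ A)
    (hF₁ : HasHNFactors S (fun ψ B => φ < ψ ∧ C ψ B) F₁) : HasHNFactors S C X := by
  by_cases hA0 : IsZero A
  · have : IsIso a := (Triangle.isZero₃_iff_isIso₁ _ hT).1 hA0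
    exact (hF₁.mono fun _ _ h => h.2).of_iso (asIso a)
  rcases hF₁ with hF₁ | ⟨H₁, hH₁⟩
  · have : IsIso b := (Triangle.isZero₁_iff_isIso₂ _ hT).1 hF₁
    exact (of_semistable hA hC).of_iso (asIso b).symm
  refine Or.inr ⟨H₁.cons hT hA hA0 (hH₁ 0 (Nat.zero_le _)).1, ?_⟩
  rintro (_ | j) hj
  · exact hC
  · exact (hH₁ j (Nat.le_of_succ_le_succ hj)).2

end HasHNFactors

namespace HNFiltration

variable {S : Slicing D} {X : D} (H : HNFiltration S X)

lemma hasHNFactors_F {C : ℝ → D → Prop} {m : ℕ} (hm : m ≤ H.n + 1)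
    (hC : ∀ j, m ≤ j → j ≤ H.n → C (H.phase j) (H.A j)) : HasHNFactors S C (H.F m) := by
  rcases hm.lt_or_eq with hm | rfl
  · refine Or.inr ⟨H.tail m (by omega), fun j hj => hC (m + j) (by omega) ?_⟩
    change j ≤ H.n - m at hj
    omega
  · exact Or.inl H.isZero_top

end HNFiltration

/-- Peeling off the lowest factor `A 0` of `X`: by the octahedral axiom, the fibre `Y₁` of
`Y → X → A 0` is an extension of `H.F 1` by `B`, so recursion applies to it. -/
theorem HNFiltration.hasHNFactors_of_distTriang_semistable₁ [IsTriangulated D]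
    {S : Slicing D} {X : D} (H : HNFiltration S X) {C : ℝ → D → Prop} {ψ : ℝ} {B Y : D}
    {u : B ⟶ Y} {v : Y ⟶ X} {w : X ⟶ B⟦(1 : ℤ)⟧} (hT : Triangle.mk u v w ∈ distTriang D)
    (hB : S.P ψ B) (hCB : C ψ B) (hH : ∀ j ≤ H.n, H.phase j < ψ ∧ C (H.phase j) (H.A j)) :
    HasHNFactors S C Y := by
  obtain ⟨_, g, _, hT₀⟩ := H.exists_distTriang_zero
  obtain ⟨Y₁, _, _, hY₁⟩ := distinguished_cocone_triangle₁ (v ≫ g)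
  have hφ₀ := hH 0 (Nat.zero_le _)
  have hB₁ : HasHNFactors S (fun φ A => H.phase 0 < φ ∧ C φ A) Y₁ := by
    have O := Triangulated.someOctahedron' rfl hT hT₀ hY₁
    by_cases hn : H.n = 0
    · have : IsIso O.m₁ := (Triangle.isZero₃_iff_isIso₁ _ O.mem).1 (by
        simpa [hn] using H.isZero_top)
      exact (HasHNFactors.of_semistable hB ⟨hφ₀.1, hCB⟩).of_iso (asIso O.m₁)
    · refine (H.tail 1 (by omega)).hasHNFactors_of_distTriang_semistable₁ O.mem hB
        ⟨hφ₀.1, hCB⟩ fun j hj => ?_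
      change j ≤ H.n - 1 at hj
      exact ⟨(hH (1 + j) (by omega)).1,
        H.phase_lt_phase (by omega) (by omega), (hH (1 + j) (by omega)).2⟩
  exact .of_distTriang_semistable₃ hY₁ (H.mem 0 (Nat.zero_le _)) hφ₀.2 hB₁
termination_by H.n
decreasing_by change H.n - 1 < H.n; omega

theorem HasHNFactors.of_distTriang_semistable₁ [IsTriangulated D] {S : Slicing D}
    {C : ℝ → D → Prop} {ψ : ℝ} {B Y V : D} {u : B ⟶ Y} {v : Y ⟶ V} {w : V ⟶ B⟦(1 : ℤ)⟧}
    (hT : Triangle.mk u v w ∈ distTriang D) (hB : S.P ψ B) (hCB : C ψ B)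
    (hV : HasHNFactors S (fun φ A => φ < ψ ∧ C φ A) V) : HasHNFactors S C Y := by
  rcases hV with hV | ⟨HV, hHV⟩
  · have : IsIso u := (Triangle.isZero₃_iff_isIso₁ _ hT).1 hV
    exact (HasHNFactors.of_semistable hB hCB).of_iso (asIso u)
  · exact HV.hasHNFactors_of_distTriang_semistable₁ hT hB hCB hHV

namespace HNFiltration

variable {S : Slicing D} {X : D} (H : HNFiltration S X)

def ι : ∀ m, H.F m ⟶ X
  | 0 => eqToHom H.F_zero
  | m + 1 => H.f m ≫ ι m

theorem exists_distTriang_ι [IsTriangulated D] {C : ℝ → D → Prop} {m : ℕ} (hm : m ≤ H.n + 1)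
    (hC : ∀ j < m, C (H.phase j) (H.A j)) :
    ∃ (V : D) (b : X ⟶ V) (c : V ⟶ (H.F m)⟦(1 : ℤ)⟧),
      Triangle.mk (H.ι m) b c ∈ distTriang D ∧ HasHNFactors S C V := by
  induction m generalizing C with
  | zero =>
    refine ⟨0, 0, 0, ?_, Or.inl (isZero_zero D)⟩
    refine (Triangle.distinguished_iff_of_isZero₃ _ (isZero_zero D)).2 ?_
    change IsIso (eqToHom H.F_zero)
    infer_instance
  | succ m ih =>
    obtain ⟨V₀, b₀, c₀, hT₀, hV₀⟩ := ih (C := fun φ A => φ < H.phase m ∧ C φ A) (by omega)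
      fun j hj => ⟨H.phase_lt_phase hj (by omega), hC j (by omega)⟩
    obtain ⟨V, b, c, hT⟩ := distinguished_cocone_triangle (H.ι (m + 1))
    have O := Triangulated.someOctahedron rfl (H.dist m (by omega)) hT₀ hT
    exact ⟨V, b, c, hT,
      .of_distTriang_semistable₁ O.mem (H.mem m (by omega)) (hC m (by omega)) hV₀⟩

lemma exists_phase_threshold (θ : ℝ) :
    ∃ k ≤ H.n + 1, (∀ j < k, H.phase j < θ) ∧ ∀ j, k ≤ j → j ≤ H.n → θ ≤ H.phase j := by
  classical
  have hex : ∃ k, H.n < k ∨ θ ≤ H.phase k := ⟨H.n + 1, Or.inl (Nat.lt_succ_self _)⟩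
  refine ⟨Nat.find hex, Nat.find_le (Or.inl (Nat.lt_succ_self _)), fun j hj => ?_,
    fun j hkj hj => ?_⟩
  · exact not_le.1 (not_or.1 (Nat.find_min hex hj)).2
  · rcases Nat.find_spec hex with h | h
    · omega
    · exact h.trans (H.phase_le_phase hkj hj)

end HNFiltration

section TStructure

variable {S : Slicing D} {θ : ℝ} {Pm Pp : D → Prop}

lemma hom_eq_zero_of_semistable (hPmP : ∀ X : D, Pm X → S.P θ X)
    (hPpP : ∀ X : D, Pp X → S.P θ X) (hOrth : ∀ {X Y : D} (f : X ⟶ Y), Pm X → Pp Y → f = 0)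
    {φ ψ : ℝ} {A B : D} (hA : S.P φ A) (hB : S.P ψ B) (hCA : θ < φ ∨ Pm A)
    (hCB : ψ < θ ∨ Pp B) (g : A ⟶ B) : g = 0 := by
  rcases hCA with hφ | hA' <;> rcases hCB with hψ | hB'
  · exact S.hom_zero (hψ.trans hφ) hA hB g
  · exact S.hom_zero hφ hA (hPpP _ hB') g
  · exact S.hom_zero hψ (hPmP _ hA') hB g
  · exact hOrth g hA' hB'

theorem HNFiltration.exists_truncation_triangle_of_phase_eq [IsTriangulated D]
    (hPmP : ∀ X : D, Pm X → S.P θ X) (hPpP : ∀ X : D, Pp X → S.P θ X)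
    (hDecomp : ∀ X : D, S.P θ X → ∃ (X₁ X₂ : D), Pm X₁ ∧ Pp X₂ ∧ Nonempty (X ≅ X₁ ⊞ X₂))
    {X : D} (H : HNFiltration S X) {k : ℕ} (hk : k ≤ H.n) (hlow : ∀ j < k, H.phase j < θ)
    (hθ : H.phase k = θ) :
    ∃ (U V : D) (a : U ⟶ X) (b : X ⟶ V) (c : V ⟶ U⟦(1 : ℤ)⟧),
      HasHNFactors S (fun φ A => θ < φ ∨ Pm A) U ∧ HasHNFactors S (fun φ A => φ < θ ∨ Pp A) V ∧
        Triangle.mk a b c ∈ distTriang D := by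
  obtain ⟨X₁, X₂, hX₁, hX₂, ⟨e⟩⟩ := hDecomp _ (hθ ▸ H.mem k hk)
  have hsplit : Triangle.mk (biprod.inl ≫ e.inv) (e.hom ≫ biprod.snd) (0 : X₂ ⟶ X₁⟦(1 : ℤ)⟧) ∈
      distTriang D :=
    isomorphic_distinguished _ (binaryBiproductTriangle_distinguished X₁ X₂) _ <|
      Triangle.isoMk _ _ (Iso.refl _) e (Iso.refl _)
        (by simp [Triangle.mk, binaryBiproductTriangle])
        (by simp [Triangle.mk, binaryBiproductTriangle])
        (by simp [Triangle.mk, binaryBiproductTriangle])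
  obtain ⟨W, w, _, hW⟩ := distinguished_cocone_triangle₁ (H.g k ≫ e.hom ≫ biprod.snd)
  have hU : HasHNFactors S (fun φ A => θ < φ ∨ Pm A) W := by
    have O := Triangulated.someOctahedron' rfl (H.dist k hk) hsplit hW
    refine .of_distTriang_semistable₃ O.mem (hPmP _ hX₁) (Or.inr hX₁) ?_
    refine H.hasHNFactors_F (by omega) fun j hkj hj => ?_
    have : θ < H.phase j := hθ ▸ H.phase_lt_phase hkj hj
    exact ⟨this, Or.inl this⟩
  obtain ⟨V₀, _, _, hT₀, hV₀⟩ :=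
    H.exists_distTriang_ι (C := fun φ A => φ < θ ∧ (φ < θ ∨ Pp A)) (by omega)
      fun j hj => ⟨hlow j hj, Or.inl (hlow j hj)⟩
  obtain ⟨V, b, c, hT⟩ := distinguished_cocone_triangle (w ≫ H.ι k)
  have O := Triangulated.someOctahedron rfl hW hT₀ hT
  exact ⟨W, V, _, b, c, hU, .of_distTriang_semistable₁ O.mem (hPpP _ hX₂) (Or.inr hX₂) hV₀, hT⟩

theorem HNFiltration.exists_truncation_triangle [IsTriangulated D]
    (hPmP : ∀ X : D, Pm X → S.P θ X) (hPpP : ∀ X : D, Pp X → S.P θ X)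
    (hDecomp : ∀ X : D, S.P θ X → ∃ (X₁ X₂ : D), Pm X₁ ∧ Pp X₂ ∧ Nonempty (X ≅ X₁ ⊞ X₂))
    {X : D} (H : HNFiltration S X) :
    ∃ (U V : D) (a : U ⟶ X) (b : X ⟶ V) (c : V ⟶ U⟦(1 : ℤ)⟧),
      HasHNFactors S (fun φ A => θ < φ ∨ Pm A) U ∧ HasHNFactors S (fun φ A => φ < θ ∨ Pp A) V ∧
        Triangle.mk a b c ∈ distTriang D := by
  obtain ⟨k, hk, hlow, hhigh⟩ := H.exists_phase_threshold θ
  by_cases hθ : k ≤ H.n ∧ H.phase k = θ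
  · exact H.exists_truncation_triangle_of_phase_eq hPmP hPpP hDecomp hθ.1 hlow hθ.2
  obtain ⟨V, b, c, hT, hV⟩ := H.exists_distTriang_ι (C := fun φ A => φ < θ ∨ Pp A) hk
    fun j hj => Or.inl (hlow j hj)
  refine ⟨_, V, _, b, c, H.hasHNFactors_F hk fun j hkj hj => Or.inl ?_, hV, hT⟩
  rcases hkj.eq_or_lt with rfl | hkj
  · exact (hhigh _ le_rfl hj).lt_of_ne fun h => hθ ⟨hj, h.symm⟩
  · exact (hhigh k le_rfl (by omega)).trans_lt (H.phase_lt_phase hkj hj)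

end TStructure

theorem statement10
    {D : Type u} [Category.{v} D] [HasZeroObject D] [HasShift D ℤ] [Preadditive D]
    [∀ n : ℤ, (shiftFunctor D n).Additive] [Pretriangulated D] [IsTriangulated D]
    (S : Slicing D)
    (hHNF : ∀ X : D, ¬ IsZero X → Nonempty (HNFiltration S X))
    (θ : ℝ) (Pm Pp : D → Prop)
    (hPmP : ∀ X : D, Pm X → S.P θ X) (hPpP : ∀ X : D, Pp X → S.P θ X)
    (hPmIso : ∀ {X Y : D}, (X ≅ Y) → Pm X → Pm Y)
    (hPpIso : ∀ {X Y : D}, (X ≅ Y) → Pp X → Pp Y)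
    (hPmZero : ∀ X : D, IsZero X → Pm X) (hPpZero : ∀ X : D, IsZero X → Pp X)
    (hPmSum : ∀ X Y : D, Pm X → Pm Y → Pm (X ⊞ Y))
    (hPpSum : ∀ X Y : D, Pp X → Pp Y → Pp (X ⊞ Y))
    (hPmSummand : ∀ X Y : D, Pm (X ⊞ Y) → Pm X ∧ Pm Y)
    (hPpSummand : ∀ X Y : D, Pp (X ⊞ Y) → Pp X ∧ Pp Y)
    (hOrth₁ : ∀ {X Y : D} (f : X ⟶ Y), Pm X → Pp Y → f = 0)
    (hOrth₂ : ∀ {X Y : D} (f : X ⟶ Y), Pp X → Pm Y → f = 0)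
    (hDecomp : ∀ X : D, S.P θ X → ∃ (X₁ X₂ : D), Pm X₁ ∧ Pp X₂ ∧ Nonempty (X ≅ X₁ ⊞ X₂)) :
    IsTStructure
      (fun X : D => IsZero X ∨
        ∃ HX : HNFiltration S X, ∀ j ≤ HX.n, θ < HX.phase j ∨ Pm (HX.A j))
      (fun X : D => IsZero X ∨
        ∃ HX : HNFiltration S X, ∀ j ≤ HX.n, HX.phase j < θ ∨ Pp (HX.A j)) := by
  have hle : ∀ {φ : ℝ} {A : D}, S.P φ A → ¬ IsZero A → θ < φ ∨ Pm A → θ ≤ φ :=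
    fun hA hA0 h => h.elim le_of_lt fun hm => (S.phase_eq_of_mem (hPmP _ hm) hA hA0).le
  have hge : ∀ {φ : ℝ} {A : D}, S.P φ A → ¬ IsZero A → φ < θ ∨ Pp A → φ ≤ θ :=
    fun hA hA0 h => h.elim le_of_lt fun hp => (S.phase_eq_of_mem hA (hPpP _ hp) hA0).le
  show IsTStructure (HasHNFactors S fun φ A => θ < φ ∨ Pm A)
    (HasHNFactors S fun φ A => φ < θ ∨ Pp A)
  refine ⟨fun e hX => hX.of_iso e, fun e hX => hX.of_iso e,
    fun X hX => ?_, fun X hX => ?_, fun f hX hY => ?_, fun X => ?_⟩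
  · exact hX.shift 1 1 S.shift_mem fun hA hA0 h => Or.inl (by linarith [hle hA hA0 h])
  · exact hX.shift (-1) (-1) (fun _ _ => S.neg_one_shift_mem)
      fun hA hA0 h => Or.inl (by linarith [hge hA hA0 h])
  · exact hX.hom_eq_zero hY (hom_eq_zero_of_semistable hPmP hPpP hOrth₁) f
  · by_cases hX : IsZero X
    · exact ⟨X, 0, 𝟙 X, 0, 0, Or.inl hX, Or.inl (isZero_zero D), contractible_distinguished X⟩
    · exact (hHNF X hX).some.exists_truncation_triangle hPmP hPpP hDecomp
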